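/- arXiv:2412.12915 — 2 statements merged into one kernel-verified Lean document; each statement's English description precedes it below -/
import Mathlib

section
/- Let p be an odd prime and let G_E be a multi-EGS group satisfying the hypotheses: there exist m ∈ {1,…,p}, k ∈ {1,…,r_m} and j ∈ {1,…,p−1} such that e^{(m)}_{k,j} ≠ 0 and e^{(l)}_{i,p−j} = 0 for all i ∈ {1,…,r_l} and all l ∈ {1,…,p}. Then G_E is self-replicating: for every first-level vertex x ∈ X, the projection homomorphism π_x : St_{G_E}(x) → G_E, g ↦ g|_x, is surjective onto G_E. -/
/-- An automorphism of the rooted `p`-ary tree, encoded by its portrait: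
at every vertex (a finite word over `Fin p`) it records the permutation of the
`p` subtrees hanging at that vertex. -/
@[ext]
structure TreeAut (p : ℕ) where
  perm : List (Fin p) → Equiv.Perm (Fin p)

namespace TreeAut

variable {p : ℕ}

/-- The section of a tree automorphism at a first-level vertex `x`. -/
def sect (g : TreeAut p) (x : Fin p) : TreeAut p := ⟨fun v => g.perm (x :: v)⟩

/-- The section of a tree automorphism at an arbitrary vertex. -/
def sectV (g : TreeAut p) : List (Fin p) → TreeAut p
  | [] => g
  | x :: v => (g.sect x).sectV v

/-- The action of a tree automorphism on vertices (finite words over `Fin p`). -/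
def act (g : TreeAut p) : List (Fin p) → List (Fin p)
  | [] => []
  | x :: v => g.perm [] x :: (g.sect x).act v

/-- The inverse of the action of a tree automorphism on vertices. -/
def actInv (g : TreeAut p) : List (Fin p) → List (Fin p)
  | [] => []
  | x :: v => (g.perm []).symm x :: (g.sect ((g.perm []).symm x)).actInv v

instance : One (TreeAut p) := ⟨⟨fun _ => 1⟩⟩

/-- Composition convention as in the paper: `g * h` acts by `g` first, then `h`. -/
instance : Mul (TreeAut p) := ⟨fun g h => ⟨fun v => (g.perm v).trans (h.perm (g.act v))⟩⟩

instance : Inv (TreeAut p) := ⟨fun g => ⟨fun v => (g.perm (g.actInv v)).symm⟩⟩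

theorem perm_one (v : List (Fin p)) : (1 : TreeAut p).perm v = 1 := rfl

theorem perm_mul (g h : TreeAut p) (v : List (Fin p)) :
    (g * h).perm v = (g.perm v).trans (h.perm (g.act v)) := rfl

theorem perm_inv (g : TreeAut p) (v : List (Fin p)) :
    (g⁻¹).perm v = (g.perm (g.actInv v)).symm := rfl

theorem sect_one (x : Fin p) : (1 : TreeAut p).sect x = 1 := rfl

theorem sect_mul (g h : TreeAut p) (x : Fin p) :
    (g * h).sect x = g.sect x * h.sect (g.perm [] x) := rfl

theorem sect_inv (g : TreeAut p) (x : Fin p) :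
    (g⁻¹).sect x = (g.sect ((g.perm []).symm x))⁻¹ := rfl

theorem act_one : ∀ v : List (Fin p), (1 : TreeAut p).act v = v
  | [] => rfl
  | x :: v => by
    show (1 : Equiv.Perm (Fin p)) x :: ((1 : TreeAut p).sect x).act v = x :: v
    rw [sect_one, act_one v]
    rfl

theorem act_mul : ∀ (v : List (Fin p)) (g h : TreeAut p), (g * h).act v = h.act (g.act v)
  | [], _, _ => rfl
  | x :: v, g, h => by
    show (g * h).perm [] x :: ((g * h).sect x).act v = _
    rw [sect_mul, act_mul v]
    rfl

theorem act_inv : ∀ (v : List (Fin p)) (g : TreeAut p), (g⁻¹).act v = g.actInv v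
  | [], _ => rfl
  | x :: v, g => by
    show (g⁻¹).perm [] x :: ((g⁻¹).sect x).act v = _
    rw [sect_inv, act_inv v]
    rfl

instance : Group (TreeAut p) where
  mul_assoc g h k := by
    ext v y
    simp [perm_mul, act_mul, Equiv.trans_apply]
  one_mul g := by
    ext v y
    simp [perm_mul, perm_one, act_one]
  mul_one g := by
    ext v y
    simp [perm_mul, perm_one]
  inv_mul_cancel g := by
    ext v y
    simp [perm_mul, perm_inv, perm_one, act_inv]

end TreeAut

/-- The rooted automorphism `a = (1,…,1)ε`, where `ε = (0 1 … p-1)` is the cyclic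
rotation `x ↦ x + 1` of `Fin p`. -/
def rot (p : ℕ) [NeZero p] : TreeAut p :=
  ⟨fun v => if v = [] then Equiv.addRight (1 : Fin p) else 1⟩

/-- The components of a defining vector `v ∈ (ℤ/pℤ)^{p-1}`, read `p`-periodically:
for `1 ≤ n ≤ p-1`, `vcomp v n` is the `n`-th component of `v` (and `vcomp v n = 0`
when `n ≡ 0 mod p`). -/
def vcomp {p : ℕ} [NeZero p] (v : Fin (p - 1) → ZMod p) (n : ℕ) : ZMod p :=
  if h : n % p = 0 then 0
  else v ⟨n % p - 1, by
    have h2 : n % p < p := Nat.mod_lt _ (Nat.pos_of_ne_zero (NeZero.ne p))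
    omega⟩

/-- `N` is a quasinucleus with constant `k` for the self-similar group generated by the
symmetric set `S`: all sections at level `k` of products of two elements of `S ∪ N` lie in `N`. -/
def IsQuasiNucleusWith (p : ℕ) (S N : Set (TreeAut p)) (k : ℕ) : Prop :=
  ∀ n₁ ∈ S ∪ N, ∀ n₂ ∈ S ∪ N, ∀ v : List (Fin p), v.length = k → (n₁ * n₂).sectV v ∈ N

/-- `N` is the nucleus of the group `G` with symmetric generating set `S`:
`N` is the inclusion-minimal finite subset of `G` that is a quasinucleus for some
level constant `k ≥ 1`. -/
def IsNucleusOf (p : ℕ) (S : Set (TreeAut p)) (G : Subgroup (TreeAut p)) (N : Set (TreeAut p)) : Prop :=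
  (N ⊆ (G : Set (TreeAut p)) ∧ N.Finite ∧ ∃ k, 1 ≤ k ∧ IsQuasiNucleusWith p S N k) ∧
  ∀ N' : Set (TreeAut p), N' ⊆ (G : Set (TreeAut p)) → N'.Finite →
    (∃ k, 1 ≤ k ∧ IsQuasiNucleusWith p S N' k) → N ⊆ N'
/-- The defining wreath recursions of the generators of a multi-EGS group with datum
`E = (E^(1),…,E^(p))`: here Lean's `l : Fin p` stands for the paper's `l = l.val + 1`,
the vector `e l i : Fin (p-1) → ZMod p` is `e^(l)_i` (Lean's `n : Fin (p-1)` standing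
for the component index `n = n.val + 1 ∈ {1,…,p-1}`), each `E^(l)` consists of `r l`
linearly independent vectors, at least one `r l` is positive, and the generator
`b l i = b^(l)_i` fixes all first-level vertices, has section `b^(l)_i` at the vertex
`l - 1` and section `a^{e^(l)_{i,n}}` at the vertex `l - 1 + n (mod p)` for `1 ≤ n ≤ p-1`. -/
def IsMultiEGSDatum (p : ℕ) [NeZero p] {r : Fin p → ℕ}
    (e : ∀ l : Fin p, Fin (r l) → Fin (p - 1) → ZMod p)
    (b : ∀ l : Fin p, Fin (r l) → TreeAut p) : Prop :=
  (∃ l, 0 < r l) ∧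
  (∀ l, LinearIndependent (ZMod p) (e l)) ∧
  (∀ (l : Fin p) (i : Fin (r l)),
    (∀ x : Fin p, (b l i).act [x] = [x]) ∧
    (b l i).sect l = b l i ∧
    ∀ n : Fin (p - 1),
      (b l i).sect (l + Fin.ofNat p (n.val + 1 : ℕ)) = rot p ^ (e l i n).val)

/-- The generating set `{a} ∪ {b^(l)_i}` of a multi-EGS group. -/
def multiEGSGens (p : ℕ) [NeZero p] {r : Fin p → ℕ}
    (b : ∀ l : Fin p, Fin (r l) → TreeAut p) : Set (TreeAut p) :=
  insert (rot p) {g | ∃ l i, b l i = g}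

/-- The multi-EGS group `G_E = ⟨a, b^(l)_i⟩`. -/
def multiEGS (p : ℕ) [NeZero p] {r : Fin p → ℕ}
    (b : ∀ l : Fin p, Fin (r l) → TreeAut p) : Subgroup (TreeAut p) :=
  Subgroup.closure (multiEGSGens p b)

theorem rot_mem_multiEGS (p : ℕ) [NeZero p] {r : Fin p → ℕ}
    (b : ∀ l : Fin p, Fin (r l) → TreeAut p) : rot p ∈ multiEGS p b :=
  Subgroup.subset_closure (Set.mem_insert _ _)

theorem b_mem_multiEGS (p : ℕ) [NeZero p] {r : Fin p → ℕ}
    (b : ∀ l : Fin p, Fin (r l) → TreeAut p) (l : Fin p) (i : Fin (r l)) :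
    b l i ∈ multiEGS p b :=
  Subgroup.subset_closure (Set.mem_insert_of_mem _ ⟨l, i, rfl⟩)

/-- The subgroup `B_l = ⟨b^(l)_1, …, b^(l)_{r_l}⟩`. -/
def Bsub (p : ℕ) [NeZero p] {r : Fin p → ℕ}
    (b : ∀ l : Fin p, Fin (r l) → TreeAut p) (l : Fin p) : Subgroup (TreeAut p) :=
  Subgroup.closure {g | ∃ i, b l i = g}

/-- The set `N_E = ⟨a⟩ ∪ ⋃_{l=1}^p B_l`. -/
def nucleusSet (p : ℕ) [NeZero p] {r : Fin p → ℕ}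
    (b : ∀ l : Fin p, Fin (r l) → TreeAut p) : Set (TreeAut p) :=
  (Subgroup.zpowers (rot p) : Set (TreeAut p)) ∪
    ⋃ l : Fin p, (Bsub p b l : Set (TreeAut p))

/-! The images `π_x(St_G(x))` are subgroups, so self-replication only has to be checked on the
generators. Every `b^(l)_i` fixes the first level and is its own section at `l - 1`; conjugating
by a power of `a` moves that section to any vertex `x`. In the same way the section
`a^c`, `c = e^(m)_{k,j} ≠ 0`, of `b^(m)_k` is realised at `x`, and its `c⁻¹`-th power is `a`,
as `a` has order `p`. -/

open Fin.NatCast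

namespace TreeAut

variable {p : ℕ}

theorem perm_nil_mul (g h : TreeAut p) : (g * h).perm [] = (g.perm []).trans (h.perm []) := rfl

theorem perm_nil_inv (g : TreeAut p) : g⁻¹.perm [] = (g.perm []).symm := rfl

theorem act_singleton_eq_singleton_iff (g : TreeAut p) (x : Fin p) :
    g.act [x] = [x] ↔ g.perm [] x = x :=
  List.singleton_inj

def stabilizer (x : Fin p) : Subgroup (TreeAut p) where
  carrier := {g | g.perm [] x = x}
  one_mem' := rfl
  mul_mem' {g h} (hg : g.perm [] x = x) (hh : h.perm [] x = x) :=
    show h.perm [] (g.perm [] x) = x by rw [hg, hh]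
  inv_mem' {g} (hg : g.perm [] x = x) :=
    show (g.perm []).symm x = x from (Equiv.symm_apply_eq _).2 hg.symm

def sectHom (x : Fin p) : stabilizer x →* TreeAut p where
  toFun g := g.1.sect x
  map_one' := rfl
  map_mul' g h := by
    show g.1.sect x * h.1.sect (g.1.perm [] x) = _
    rw [show g.1.perm [] x = x from g.2]

/-- The image `π_x(St_H(x))` of the projection at the first-level vertex `x`. -/
def sectSubgroup (H : Subgroup (TreeAut p)) (x : Fin p) : Subgroup (TreeAut p) :=
  (H.subgroupOf (stabilizer x)).map (sectHom x)

theorem mem_sectSubgroup {H : Subgroup (TreeAut p)} {x : Fin p} {t : TreeAut p} :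
    t ∈ sectSubgroup H x ↔ ∃ h ∈ H, h.perm [] x = x ∧ h.sect x = t := by
  constructor
  · rintro ⟨⟨h, hx⟩, hH, rfl⟩
    exact ⟨h, hH, hx, rfl⟩
  · rintro ⟨h, hH, hx, rfl⟩
    exact ⟨⟨h, hx⟩, hH, rfl⟩

end TreeAut

open TreeAut

section Rot

variable {p : ℕ} [NeZero p]

theorem rot_pow (n : ℕ) :
    rot p ^ n = ⟨fun v => if v = [] then Equiv.addRight (n : Fin p) else 1⟩ := by
  induction n with
  | zero =>
    ext v y
    cases v <;> simp [perm_one]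
  | succ n ih =>
    ext v y
    rw [pow_succ, ih, perm_mul]
    cases v with
    | nil => simp [rot, act, add_assoc]
    | cons x w => simp [rot, act]

theorem rot_pow_perm_nil (n : ℕ) : (rot p ^ n).perm [] = Equiv.addRight (n : Fin p) := by
  simp [rot_pow]

theorem rot_pow_sect (n : ℕ) (x : Fin p) : (rot p ^ n).sect x = 1 := by
  rw [rot_pow]
  ext v y
  simp [sect, perm_one]

theorem rot_pow_card : rot p ^ p = 1 := by
  rw [rot_pow]
  ext v y
  cases v <;> simp [perm_one]

theorem sect_rot_pow_conj (g : TreeAut p) (n : ℕ) (x : Fin p) :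
    (rot p ^ n * g * (rot p ^ n)⁻¹).sect x = g.sect (x + n) := by
  rw [sect_mul, sect_mul, sect_inv, rot_pow_sect, rot_pow_sect, inv_one, one_mul, mul_one,
    rot_pow_perm_nil, Equiv.coe_addRight]

theorem rot_pow_conj_mem_stabilizer {g : TreeAut p} (hg : g.perm [] = 1) (n : ℕ) (x : Fin p) :
    rot p ^ n * g * (rot p ^ n)⁻¹ ∈ stabilizer x := by
  show (rot p ^ n * g * (rot p ^ n)⁻¹).perm [] x = x
  simp [perm_nil_mul, perm_nil_inv, hg, rot_pow_perm_nil]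

theorem sect_mem_sectSubgroup {H : Subgroup (TreeAut p)} (hrot : rot p ∈ H) {g : TreeAut p}
    (hgH : g ∈ H) (hg : g.perm [] = 1) (x y : Fin p) : g.sect y ∈ sectSubgroup H x := by
  refine mem_sectSubgroup.2 ⟨_, ?_, rot_pow_conj_mem_stabilizer hg (y - x).val x, ?_⟩
  · exact mul_mem (mul_mem (pow_mem hrot _) hgH) (inv_mem (pow_mem hrot _))
  · rw [sect_rot_pow_conj, Fin.cast_val_eq_self, add_sub_cancel]

theorem rot_mem_of_rot_pow_mem [Fact p.Prime] {H : Subgroup (TreeAut p)} {c : ZMod p}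
    (hc : c ≠ 0) (h : rot p ^ c.val ∈ H) : rot p ∈ H := by
  have hpow : (rot p ^ c.val) ^ (c⁻¹).val = rot p := by
    rw [← pow_mul, pow_eq_pow_mod _ rot_pow_card, ← ZMod.val_mul, mul_inv_cancel₀ hc,
      ZMod.val_one, pow_one]
  exact hpow ▸ pow_mem h _

end Rot

section MultiEGS

variable {p : ℕ} [NeZero p] {r : Fin p → ℕ} {e : ∀ l : Fin p, Fin (r l) → Fin (p - 1) → ZMod p}
  {b : ∀ l : Fin p, Fin (r l) → TreeAut p}

theorem IsMultiEGSDatum.perm_nil_eq_one (hdatum : IsMultiEGSDatum p e b) (l : Fin p)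
    (i : Fin (r l)) : (b l i).perm [] = 1 :=
  Equiv.ext fun x => ((b l i).act_singleton_eq_singleton_iff x).1 ((hdatum.2.2 l i).1 x)

theorem IsMultiEGSDatum.multiEGS_le_sectSubgroup [Fact p.Prime] (hdatum : IsMultiEGSDatum p e b)
    {m : Fin p} {k : Fin (r m)} {j : Fin (p - 1)} (hkj : e m k j ≠ 0) (x : Fin p) :
    multiEGS p b ≤ sectSubgroup (multiEGS p b) x := by
  have hsect : ∀ l i y, (b l i).sect y ∈ sectSubgroup (multiEGS p b) x := fun l i =>
    sect_mem_sectSubgroup (rot_mem_multiEGS p b) (b_mem_multiEGS p b l i)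
      (hdatum.perm_nil_eq_one l i) x
  refine (Subgroup.closure_le _).2 (Set.insert_subset ?_ ?_)
  · refine rot_mem_of_rot_pow_mem hkj ?_
    rw [← (hdatum.2.2 m k).2.2 j]
    exact hsect m k _
  · rintro _ ⟨l, i, rfl⟩
    rw [← (hdatum.2.2 l i).2.1]
    exact hsect l i l

end MultiEGS

theorem multiEGS_selfReplicating_general (p : ℕ) [Fact p.Prime] [NeZero p]
    (r : Fin p → ℕ)
    (e : ∀ l : Fin p, Fin (r l) → Fin (p - 1) → ZMod p)
    (b : ∀ l : Fin p, Fin (r l) → TreeAut p)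
    (hdatum : IsMultiEGSDatum p e b)
    (m : Fin p) (k : Fin (r m)) (j : Fin (p - 1))
    (hkj : e m k j ≠ 0) :
    ∀ x : Fin p, ∀ g ∈ multiEGS p b, ∃ h ∈ multiEGS p b,
      h.act [x] = [x] ∧ h.sect x = g := by
  intro x g hg
  obtain ⟨h, hH, hx, rfl⟩ := mem_sectSubgroup.1 (hdatum.multiEGS_le_sectSubgroup hkj x hg)
  exact ⟨h, hH, (h.act_singleton_eq_singleton_iff x).2 hx, rfl⟩

/-- **Self-replication of multi-EGS groups.** Under the hypotheses of Theorem A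
(there are `m`, `k ∈ {1,…,r_m}` and `j ∈ {1,…,p-1}` with `e^(m)_{k,j} ≠ 0` and
`e^(l)_{i,p-j} = 0` for all `i, l`), the multi-EGS group `G_E` is self-replicating:
for every first-level vertex `x`, the projection `π_x : St_{G_E}(x) → G_E`,
`g ↦ g|_x`, is surjective onto `G_E`. -/
theorem multiEGS_selfReplicating (p : ℕ) [Fact p.Prime] [NeZero p] (hp : Odd p)
    (r : Fin p → ℕ)
    (e : ∀ l : Fin p, Fin (r l) → Fin (p - 1) → ZMod p)
    (b : ∀ l : Fin p, Fin (r l) → TreeAut p)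
    (hdatum : IsMultiEGSDatum p e b)
    (m : Fin p) (k : Fin (r m)) (j : Fin (p - 1))
    (hkj : e m k j ≠ 0)
    (hcol : ∀ (l : Fin p) (i : Fin (r l)), vcomp (e l i) (p - (j.val + 1)) = 0) :
    ∀ x : Fin p, ∀ g ∈ multiEGS p b, ∃ h ∈ multiEGS p b,
      h.act [x] = [x] ∧ h.sect x = g :=
  multiEGS_selfReplicating_general p r e b hdatum m k j hkj
end

section
/- Let p ≥ 3 be a prime, 1 ≤ r < p, and let G_{E^{(p)}} = ⟨a, b_1,…,b_r⟩ be the multi-edge spinal group defined by an r-tuple E^{(p)} of linearly independent vectors in (Z/pZ)^{p−1}. Then G_{E^{(p)}} is a contracting group with nucleus N = ⟨a⟩ ∪ ⟨b_1,…,b_r⟩, and |N| = p^r + p − 1. -/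
open Fin.NatCast in
/-- The defining wreath recursions of the generators of a multi-edge spinal group
defined by an `r`-tuple `E^(p)` of linearly independent vectors of `(ℤ/pℤ)^{p-1}`:
each `b i` fixes all first-level vertices, has section `a^{e_{i,n}}` at the vertex
`n - 1` for `1 ≤ n ≤ p - 1` (Lean's `n : Fin (p-1)` is the paper's `n = n.val + 1`)
and section `b i` at the vertex `p - 1`. -/
def IsSpinalDatum (p : ℕ) [NeZero p] {r : ℕ}
    (e : Fin r → Fin (p - 1) → ZMod p) (b : Fin r → TreeAut p) : Prop :=
  LinearIndependent (ZMod p) e ∧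
  ∀ i : Fin r,
    (∀ x : Fin p, (b i).act [x] = [x]) ∧
    (b i).sect (((p - 1 : ℕ) : Fin p)) = b i ∧
    ∀ n : Fin (p - 1), (b i).sect ((n.val : ℕ) : Fin p) = rot p ^ (e i n).val

/-- The multi-edge spinal group `G_{E^(p)} = ⟨a, b_1, …, b_r⟩`. -/
def spinalGroup (p : ℕ) [NeZero p] {r : ℕ} (b : Fin r → TreeAut p) :
    Subgroup (TreeAut p) :=
  Subgroup.closure (insert (rot p) (Set.range b))

theorem rot_mem_spinal (p : ℕ) [NeZero p] {r : ℕ} (b : Fin r → TreeAut p) :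
    rot p ∈ spinalGroup p b :=
  Subgroup.subset_closure (Set.mem_insert _ _)

theorem b_mem_spinal (p : ℕ) [NeZero p] {r : ℕ} (b : Fin r → TreeAut p) (i : Fin r) :
    b i ∈ spinalGroup p b :=
  Subgroup.subset_closure (Set.mem_insert_of_mem _ ⟨i, rfl⟩)

/-!
Powers of `a` are rooted automorphisms with trivial sections. The elements of
`⟨b_1, …, b_r⟩` are exactly the spinal automorphisms `g = (a ^ f_1, …, a ^ f_{p-1}, g)`
with `f` in the span of `e_1, …, e_r`, and `g ↦ f` is a bijection onto that span; so this
subgroup has `p ^ r` elements, meets `⟨a⟩` trivially, and level-one sections of products of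
two elements of `N = ⟨a⟩ ∪ ⟨b_1, …, b_r⟩` stay in `N`. Conversely, a quasinucleus at level
`k` contains every spinal `g`, as the section of `g * 1` at `(p-1)^k`, and every `a ^ m`, as
the section at `(p-1)^(k-1) n` of a spinal `g` with `f n = m`: such `g` exist because some
coordinate `e_{i,n}` is nonzero, hence invertible in `ℤ/pℤ`.
-/

open Fin.NatCast

namespace TreeAut

variable {p : ℕ}

theorem ext_sect {g h : TreeAut p} (hroot : g.perm [] = h.perm [])
    (hsect : ∀ x, g.sect x = h.sect x) : g = h := by
  ext1; funext v
  cases v with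
  | nil => exact hroot
  | cons x v => exact congrArg (perm · v) (hsect x)

theorem sect_mul_of_perm_nil_eq_one {g : TreeAut p} (hg : g.perm [] = 1) (h : TreeAut p)
    (x : Fin p) : (g * h).sect x = g.sect x * h.sect x := by
  rw [sect_mul, hg, Equiv.Perm.one_apply]

theorem sect_inv_of_perm_nil_eq_one {g : TreeAut p} (hg : g.perm [] = 1) (x : Fin p) :
    (g⁻¹).sect x = (g.sect x)⁻¹ := by
  rw [sect_inv, hg]
  rfl

theorem sectV_singleton (g : TreeAut p) (x : Fin p) : g.sectV [x] = g.sect x := rfl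

theorem sectV_append (g : TreeAut p) (u w : List (Fin p)) :
    g.sectV (u ++ w) = (g.sectV u).sectV w := by
  induction u generalizing g with
  | nil => rfl
  | cons x u ih => exact ih (g.sect x)

theorem sectV_replicate_of_sect_eq {g : TreeAut p} {x : Fin p} (hx : g.sect x = g) (k : ℕ) :
    g.sectV (List.replicate k x) = g := by
  induction k with
  | zero => rfl
  | succ k ih => rwa [List.replicate_succ, sectV, hx]

end TreeAut

theorem IsQuasiNucleusWith.sectV_mem {p k : ℕ} {S N : Set (TreeAut p)}
    (hq : IsQuasiNucleusWith p S N k) (h1 : 1 ∈ S) {g : TreeAut p} (hg : g ∈ S)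
    {v : List (Fin p)} (hv : v.length = k) : g.sectV v ∈ N := by
  simpa using hq g (Or.inl hg) 1 (Or.inl h1) v hv

open TreeAut

section Rot

variable {p : ℕ} [NeZero p]

theorem rot_sect (x : Fin p) : (rot p).sect x = 1 := by
  ext v : 2
  simp [rot, sect, perm_one]

theorem rot_pow_eq_one_iff (n : ℕ) : rot p ^ n = 1 ↔ p ∣ n := by
  rw [← Fin.natCast_eq_zero]
  constructor
  · intro h
    simpa [rot_pow_perm_nil, perm_one] using congrArg (fun g : TreeAut p => g.perm [] 0) h
  · intro h
    refine ext_sect ?_ fun x => rot_pow_sect n x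
    ext y
    simp [rot_pow_perm_nil, h, perm_one]

theorem orderOf_rot : orderOf (rot p) = p :=
  Nat.dvd_antisymm (orderOf_dvd_of_pow_eq_one ((rot_pow_eq_one_iff p).2 dvd_rfl))
    ((rot_pow_eq_one_iff _).1 (pow_orderOf_eq_one _))

theorem rot_pow_val_add (z w : ZMod p) :
    rot p ^ (z + w).val = rot p ^ z.val * rot p ^ w.val := by
  rw [← pow_add, ZMod.val_add, ← pow_eq_pow_mod _ ((rot_pow_eq_one_iff p).2 dvd_rfl)]

theorem mem_zpowers_rot_iff {g : TreeAut p} :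
    g ∈ Subgroup.zpowers (rot p) ↔ ∃ z : ZMod p, rot p ^ z.val = g := by
  have hfin : IsOfFinOrder (rot p) := orderOf_pos_iff.1 (by rw [orderOf_rot]; exact NeZero.pos p)
  rw [← hfin.mem_powers_iff_mem_zpowers, Submonoid.mem_powers_iff]
  constructor
  · rintro ⟨n, rfl⟩
    refine ⟨n, ?_⟩
    rw [ZMod.val_natCast, ← pow_eq_pow_mod _ ((rot_pow_eq_one_iff p).2 dvd_rfl)]
  · rintro ⟨z, rfl⟩
    exact ⟨z.val, rfl⟩

theorem sect_eq_one_of_mem_zpowers_rot {g : TreeAut p} (hg : g ∈ Subgroup.zpowers (rot p))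
    (x : Fin p) : g.sect x = 1 := by
  obtain ⟨z, rfl⟩ := mem_zpowers_rot_iff.1 hg
  exact rot_pow_sect _ x

theorem ncard_zpowers_rot : (Subgroup.zpowers (rot p) : Set (TreeAut p)).ncard = p := by
  rw [← Nat.card_coe_set_eq, SetLike.coe_sort_coe, Nat.card_zpowers, orderOf_rot]

end Rot

section Spinal

variable {p : ℕ} [NeZero p]

theorem eq_natCast_sub_one_or_exists_natCast (x : Fin p) :
    x = ((p - 1 : ℕ) : Fin p) ∨ ∃ n : Fin (p - 1), x = ((n : ℕ) : Fin p) := by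
  by_cases hx : x.val = p - 1
  · left
    ext
    rw [hx, Fin.val_natCast, Nat.mod_eq_of_lt (by have := NeZero.pos p; omega)]
  · exact Or.inr ⟨⟨x.val, by omega⟩, (Fin.cast_val_eq_self x).symm⟩

/-- `g = (a ^ f_1, …, a ^ f_{p-1}, g)`; as in `IsSpinalDatum`, the paper's `f_{n+1}` is `f n`. -/
structure IsSpinalWith (f : Fin (p - 1) → ZMod p) (g : TreeAut p) : Prop where
  perm_nil : g.perm [] = 1
  sect_last : g.sect ((p - 1 : ℕ) : Fin p) = g
  sect_natCast : ∀ n : Fin (p - 1), g.sect ((n : ℕ) : Fin p) = rot p ^ (f n).val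

namespace IsSpinalWith

variable {f f' : Fin (p - 1) → ZMod p} {g h : TreeAut p}

theorem one : IsSpinalWith 0 (1 : TreeAut p) where
  perm_nil := rfl
  sect_last := rfl
  sect_natCast n := by simp [sect_one]

theorem mul (hg : IsSpinalWith f g) (hh : IsSpinalWith f' h) : IsSpinalWith (f + f') (g * h) where
  perm_nil := by rw [perm_nil_mul, hg.perm_nil, hh.perm_nil]; rfl
  sect_last := by rw [sect_mul_of_perm_nil_eq_one hg.perm_nil, hg.sect_last, hh.sect_last]
  sect_natCast n := by
    rw [sect_mul_of_perm_nil_eq_one hg.perm_nil, hg.sect_natCast, hh.sect_natCast, Pi.add_apply,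
      rot_pow_val_add]

theorem inv (hg : IsSpinalWith f g) : IsSpinalWith (-f) g⁻¹ where
  perm_nil := by rw [perm_inv, show g.actInv [] = [] from rfl, hg.perm_nil]; rfl
  sect_last := by rw [sect_inv_of_perm_nil_eq_one hg.perm_nil, hg.sect_last]
  sect_natCast n := by
    rw [sect_inv_of_perm_nil_eq_one hg.perm_nil, hg.sect_natCast]
    refine (eq_inv_of_mul_eq_one_left ?_).symm
    rw [← rot_pow_val_add, Pi.neg_apply, neg_add_cancel, ZMod.val_zero, pow_zero]

theorem pow (hg : IsSpinalWith f g) (k : ℕ) : IsSpinalWith (k • f) (g ^ k) := by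
  induction k with
  | zero => simpa using one
  | succ k ih =>
    rw [pow_succ, succ_nsmul]
    exact ih.mul hg

theorem eq (hg : IsSpinalWith f g) (hh : IsSpinalWith f h) : g = h := by
  ext1
  funext v
  induction v with
  | nil => rw [hg.perm_nil, hh.perm_nil]
  | cons x v ih =>
    change (g.sect x).perm v = (h.sect x).perm v
    rcases eq_natCast_sub_one_or_exists_natCast x with rfl | ⟨n, rfl⟩
    · rw [hg.sect_last, hh.sect_last, ih]
    · rw [hg.sect_natCast, hh.sect_natCast]

end IsSpinalWith

/-- Recovers `f` from `g|_n = a ^ f n`, as `a ^ m` sends `0` to `m`. -/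
def spinalExponents (g : TreeAut p) (n : Fin (p - 1)) : ZMod p :=
  (((g.sect ((n : ℕ) : Fin p)).perm [] 0 : Fin p) : ℕ)

theorem IsSpinalWith.spinalExponents_eq {f : Fin (p - 1) → ZMod p} {g : TreeAut p}
    (hg : IsSpinalWith f g) : spinalExponents g = f := by
  funext n
  simp [spinalExponents, hg.sect_natCast, rot_pow_perm_nil, Fin.val_natCast,
    Nat.mod_eq_of_lt (ZMod.val_lt _)]

variable {r : ℕ} {e : Fin r → Fin (p - 1) → ZMod p} {b : Fin r → TreeAut p}

theorem IsSpinalDatum.isSpinalWith (hd : IsSpinalDatum p e b) (i : Fin r) :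
    IsSpinalWith (e i) (b i) := by
  obtain ⟨hfix, hlast, hsect⟩ := hd.2 i
  exact ⟨Equiv.ext fun x => (List.cons.inj (hfix x)).1, hlast, hsect⟩

theorem exists_isSpinalWith_of_mem_closure (hb : ∀ i, IsSpinalWith (e i) (b i)) {g : TreeAut p}
    (hg : g ∈ Subgroup.closure (Set.range b)) :
    ∃ f ∈ Submodule.span (ZMod p) (Set.range e), IsSpinalWith f g := by
  induction hg using Subgroup.closure_induction with
  | mem _ hx =>
    obtain ⟨i, rfl⟩ := hx
    exact ⟨e i, Submodule.subset_span ⟨i, rfl⟩, hb i⟩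
  | one => exact ⟨0, zero_mem _, .one⟩
  | mul _ _ _ _ ihg ihh =>
    obtain ⟨f, hf, hgf⟩ := ihg
    obtain ⟨f', hf', hhf⟩ := ihh
    exact ⟨f + f', add_mem hf hf', hgf.mul hhf⟩
  | inv _ _ ih =>
    obtain ⟨f, hf, hgf⟩ := ih
    exact ⟨-f, neg_mem hf, hgf.inv⟩

theorem exists_mem_closure_isSpinalWith (hb : ∀ i, IsSpinalWith (e i) (b i))
    {f : Fin (p - 1) → ZMod p} (hf : f ∈ Submodule.span (ZMod p) (Set.range e)) :
    ∃ g ∈ Subgroup.closure (Set.range b), IsSpinalWith f g := by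
  induction hf using Submodule.span_induction with
  | mem _ hx =>
    obtain ⟨i, rfl⟩ := hx
    exact ⟨b i, Subgroup.subset_closure ⟨i, rfl⟩, hb i⟩
  | zero => exact ⟨1, one_mem _, .one⟩
  | add _ _ _ _ ihf ihf' =>
    obtain ⟨g, hg, hgf⟩ := ihf
    obtain ⟨h, hh, hhf⟩ := ihf'
    exact ⟨g * h, mul_mem hg hh, hgf.mul hhf⟩
  | smul c f _ ih =>
    obtain ⟨g, hg, hgf⟩ := ih
    refine ⟨g ^ c.val, pow_mem hg _, ?_⟩
    have hsmul : c.val • f = c • f := by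
      rw [← Nat.cast_smul_eq_nsmul (ZMod p), ZMod.natCast_zmod_val]
    exact hsmul ▸ hgf.pow c.val

theorem spinalExponents_image_closure (hb : ∀ i, IsSpinalWith (e i) (b i)) :
    spinalExponents '' (Subgroup.closure (Set.range b) : Set (TreeAut p)) =
      Submodule.span (ZMod p) (Set.range e) := by
  ext f
  constructor
  · rintro ⟨g, hg, rfl⟩
    obtain ⟨f, hf, hgf⟩ := exists_isSpinalWith_of_mem_closure hb hg
    rwa [hgf.spinalExponents_eq]
  · intro hf
    obtain ⟨g, hg, hgf⟩ := exists_mem_closure_isSpinalWith hb hf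
    exact ⟨g, hg, hgf.spinalExponents_eq⟩

theorem injOn_spinalExponents_closure (hb : ∀ i, IsSpinalWith (e i) (b i)) :
    Set.InjOn spinalExponents (Subgroup.closure (Set.range b) : Set (TreeAut p)) := by
  intro g hg h hh hgh
  obtain ⟨f, -, hgf⟩ := exists_isSpinalWith_of_mem_closure hb hg
  obtain ⟨f', -, hhf⟩ := exists_isSpinalWith_of_mem_closure hb hh
  rw [hgf.spinalExponents_eq, hhf.spinalExponents_eq] at hgh
  subst hgh
  exact hgf.eq hhf

theorem ncard_closure_range [Fact p.Prime] (hb : ∀ i, IsSpinalWith (e i) (b i))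
    (he : LinearIndependent (ZMod p) e) :
    (Subgroup.closure (Set.range b) : Set (TreeAut p)).ncard = p ^ r := by
  rw [← (injOn_spinalExponents_closure hb).ncard_image, spinalExponents_image_closure hb,
    ← Nat.card_coe_set_eq, SetLike.coe_sort_coe, Module.natCard_eq_pow_finrank (K := ZMod p),
    finrank_span_eq_card he, Nat.card_zmod, Fintype.card_fin]

theorem zpowers_rot_inter_closure (hb : ∀ i, IsSpinalWith (e i) (b i)) :
    (Subgroup.zpowers (rot p) : Set (TreeAut p)) ∩ Subgroup.closure (Set.range b) = {1} := by
  refine Set.Subset.antisymm ?_ (Set.singleton_subset_iff.2 ⟨one_mem _, one_mem _⟩)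
  rintro g ⟨hgA, hgB⟩
  obtain ⟨f, -, hgf⟩ := exists_isSpinalWith_of_mem_closure hb hgB
  exact ext_sect hgf.perm_nil (sect_eq_one_of_mem_zpowers_rot hgA)

abbrev spinalNucleus (b : Fin r → TreeAut p) : Set (TreeAut p) :=
  (Subgroup.zpowers (rot p) : Set (TreeAut p)) ∪ Subgroup.closure (Set.range b)

theorem sect_last_mem_closure (hb : ∀ i, IsSpinalWith (e i) (b i)) {g : TreeAut p}
    (hg : g ∈ spinalNucleus b) :
    g.sect ((p - 1 : ℕ) : Fin p) ∈ Subgroup.closure (Set.range b) := by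
  rcases hg with hg | hg
  · rw [sect_eq_one_of_mem_zpowers_rot hg]
    exact one_mem _
  · obtain ⟨f, -, hgf⟩ := exists_isSpinalWith_of_mem_closure hb hg
    rwa [hgf.sect_last]

theorem sect_natCast_mem_zpowers_rot (hb : ∀ i, IsSpinalWith (e i) (b i)) {g : TreeAut p}
    (hg : g ∈ spinalNucleus b)
    (n : Fin (p - 1)) : g.sect ((n : ℕ) : Fin p) ∈ Subgroup.zpowers (rot p) := by
  rcases hg with hg | hg
  · rw [sect_eq_one_of_mem_zpowers_rot hg]
    exact one_mem _
  · obtain ⟨f, -, hgf⟩ := exists_isSpinalWith_of_mem_closure hb hg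
    rw [hgf.sect_natCast]
    exact Subgroup.npow_mem_zpowers _ _

theorem sect_mem_spinalNucleus (hb : ∀ i, IsSpinalWith (e i) (b i)) {g : TreeAut p}
    (hg : g ∈ spinalNucleus b)
    (x : Fin p) :
    g.sect x ∈ spinalNucleus b := by
  rcases eq_natCast_sub_one_or_exists_natCast x with rfl | ⟨n, rfl⟩
  · exact Or.inr (sect_last_mem_closure hb hg)
  · exact Or.inl (sect_natCast_mem_zpowers_rot hb hg n)

theorem isQuasiNucleusWith_spinalNucleus_one (hb : ∀ i, IsSpinalWith (e i) (b i)) :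
    IsQuasiNucleusWith p (spinalNucleus b) (spinalNucleus b) 1 := by
  intro g hg h hh v hv
  rw [Set.union_self] at hg hh
  obtain ⟨x, rfl⟩ := List.length_eq_one_iff.1 hv
  rw [sectV_singleton]
  rcases hg with hgA | hgB
  · rw [sect_mul, sect_eq_one_of_mem_zpowers_rot hgA, one_mul]
    exact sect_mem_spinalNucleus hb hh _
  · obtain ⟨f, -, hgf⟩ := exists_isSpinalWith_of_mem_closure hb hgB
    rw [sect_mul_of_perm_nil_eq_one hgf.perm_nil]
    rcases eq_natCast_sub_one_or_exists_natCast x with rfl | ⟨n, rfl⟩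
    · rw [hgf.sect_last]
      exact Or.inr (mul_mem hgB (sect_last_mem_closure hb hh))
    · exact Or.inl (mul_mem (sect_natCast_mem_zpowers_rot hb (Or.inr hgB) n)
        (sect_natCast_mem_zpowers_rot hb hh n))

theorem closure_subset_of_isQuasiNucleusWith (hb : ∀ i, IsSpinalWith (e i) (b i))
    {N : Set (TreeAut p)} {k : ℕ}
    (hq : IsQuasiNucleusWith p (spinalNucleus b) N k) :
    (Subgroup.closure (Set.range b) : Set (TreeAut p)) ⊆ N := by
  intro g hg
  obtain ⟨f, -, hgf⟩ := exists_isSpinalWith_of_mem_closure hb hg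
  have hmem := hq.sectV_mem (Or.inl (one_mem _)) (Or.inr hg)
    (List.length_replicate (n := k) (a := ((p - 1 : ℕ) : Fin p)))
  rwa [sectV_replicate_of_sect_eq hgf.sect_last] at hmem

theorem zpowers_rot_subset_of_isQuasiNucleusWith [Fact p.Prime]
    (hb : ∀ i, IsSpinalWith (e i) (b i)) {i : Fin r} (hi : e i ≠ 0)
    {N : Set (TreeAut p)} {k : ℕ} (hk : 1 ≤ k)
    (hq : IsQuasiNucleusWith p (spinalNucleus b) N k) :
    (Subgroup.zpowers (rot p) : Set (TreeAut p)) ⊆ N := by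
  intro g hg
  obtain ⟨z, rfl⟩ := mem_zpowers_rot_iff.1 hg
  obtain ⟨n, hn⟩ := Function.ne_iff.1 hi
  obtain ⟨h, hh, hhf⟩ := exists_mem_closure_isSpinalWith hb
    (Submodule.smul_mem _ (z * (e i n)⁻¹) (Submodule.subset_span ⟨i, rfl⟩))
  have hsect : h.sect ((n : ℕ) : Fin p) = rot p ^ z.val := by
    rw [hhf.sect_natCast, Pi.smul_apply, smul_eq_mul, mul_assoc, inv_mul_cancel₀ hn, mul_one]
  have hmem := hq.sectV_mem (Or.inl (one_mem _)) (Or.inr hh)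
    (v := List.replicate (k - 1) ((p - 1 : ℕ) : Fin p) ++ [((n : ℕ) : Fin p)])
    (by simp only [List.length_append, List.length_replicate, List.length_singleton]; omega)
  rwa [sectV_append, sectV_replicate_of_sect_eq hhf.sect_last, sectV_singleton, hsect] at hmem

end Spinal

theorem spinal_contracting_nucleus_general (p : ℕ) [Fact p.Prime] [NeZero p]
    (r : ℕ) (hr1 : 1 ≤ r)
    (e : Fin r → Fin (p - 1) → ZMod p)
    (b : Fin r → TreeAut p)
    (hdatum : IsSpinalDatum p e b) :
    IsNucleusOf p
      ((Subgroup.zpowers (rot p) : Set (TreeAut p)) ∪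
        (Subgroup.closure (Set.range b) : Set (TreeAut p)))
      (spinalGroup p b)
      ((Subgroup.zpowers (rot p) : Set (TreeAut p)) ∪
        (Subgroup.closure (Set.range b) : Set (TreeAut p))) ∧
    ((Subgroup.zpowers (rot p) : Set (TreeAut p)) ∪
        (Subgroup.closure (Set.range b) : Set (TreeAut p))).ncard = p ^ r + p - 1 := by
  have hb := hdatum.isSpinalWith
  have hcardA := ncard_zpowers_rot (p := p)
  have hcardB := ncard_closure_range hb hdatum.1
  have hfinA := Set.finite_of_ncard_pos (hcardA ▸ NeZero.pos p)
  have hfinB := Set.finite_of_ncard_pos (hcardB ▸ pow_pos (NeZero.pos p) r)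
  refine ⟨⟨⟨Set.union_subset ?_ ?_, hfinA.union hfinB, 1, le_rfl,
    isQuasiNucleusWith_spinalNucleus_one hb⟩, ?_⟩, ?_⟩
  · exact Subgroup.zpowers_le.2 (rot_mem_spinal p b)
  · exact Subgroup.closure_mono (Set.subset_insert _ _)
  · rintro N - - ⟨k, hk, hq⟩
    exact Set.union_subset (zpowers_rot_subset_of_isQuasiNucleusWith hb
      (hdatum.1.ne_zero ⟨0, hr1⟩) hk hq) (closure_subset_of_isQuasiNucleusWith hb hq)
  · have hunion := Set.ncard_union_add_ncard_inter _ _ hfinA hfinB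
    rw [zpowers_rot_inter_closure hb, Set.ncard_singleton, hcardA, hcardB] at hunion
    omega

/-- **Contracting property and nucleus of multi-edge spinal groups.**
For a prime `p ≥ 3` and `1 ≤ r < p`, the multi-edge spinal group
`G_{E^(p)} = ⟨a, b_1, …, b_r⟩` defined by an `r`-tuple of linearly independent
vectors of `(ℤ/pℤ)^{p-1}` is contracting with nucleus
`N = ⟨a⟩ ∪ ⟨b_1, …, b_r⟩`, and `|N| = p^r + p - 1`. -/
theorem spinal_contracting_nucleus (p : ℕ) [Fact p.Prime] [NeZero p] (hp3 : 3 ≤ p)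
    (r : ℕ) (hr1 : 1 ≤ r) (hrp : r < p)
    (e : Fin r → Fin (p - 1) → ZMod p)
    (b : Fin r → TreeAut p)
    (hdatum : IsSpinalDatum p e b) :
    IsNucleusOf p
      ((Subgroup.zpowers (rot p) : Set (TreeAut p)) ∪
        (Subgroup.closure (Set.range b) : Set (TreeAut p)))
      (spinalGroup p b)
      ((Subgroup.zpowers (rot p) : Set (TreeAut p)) ∪
        (Subgroup.closure (Set.range b) : Set (TreeAut p))) ∧
    ((Subgroup.zpowers (rot p) : Set (TreeAut p)) ∪
        (Subgroup.closure (Set.range b) : Set (TreeAut p))).ncard = p ^ r + p - 1 :=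
  spinal_contracting_nucleus_general p r hr1 e b hdatum
end
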